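/- Every safe strategy σ satisfies the safety objective when loaded with the minimal safety vector: for every state s with ml_S(s) ≤ cap and every initial load d with ml_S(s) ≤ d ≤ cap, all σ-compatible runs from s loaded with d are safe. In particular, along every finite σ-compatible path α from s loaded with d, the last resource level satisfies lastLevel(α) ≥ ml_S(last(α)) ≠ ⊥. -/

import Mathlib

open Classical

/-- A consumption Markov decision process. -/
structure CMDP (S A : Type) [Fintype S] [Fintype A] where
  /-- transition function -/
  δ : S → A → S → NNReal
  δ_sum : ∀ s a, ∑ t, δ s a t = 1
  /-- consumption function -/
  γ : S → A → ℕ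
  /-- reload states -/
  R : Finset S
  /-- capacity -/
  cap : ℕ

namespace CMDP

variable {S A : Type} [Fintype S] [Fintype A] [DecidableEq S] [DecidableEq A]

/-- successors with positive transition probability -/
noncomputable def Succ (M : CMDP S A) (s : S) (a : A) : Finset S :=
  Finset.univ.filter (fun t => 0 < M.δ s a t)

/-- A (history-dependent) strategy: takes the initial load, the history
(list of state-action steps performed so far) and the current state. -/
def Strat (S A : Type) := ℕ → List (S × A) → S → A

/-- An infinite run: a sequence of states and actions. -/
structure Run (S A : Type) where
  st : ℕ → S
  ac : ℕ → A

/-- the history (list of steps) formed by the first `i` steps of a run -/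
def hist (ρ : Run S A) (i : ℕ) : List (S × A) :=
  (List.range i).map (fun j => (ρ.st j, ρ.ac j))

/-- a run is compatible with strategy `σ` under initial load `d` -/
def Compatible (M : CMDP S A) (σ : Strat S A) (d : ℕ) (ρ : Run S A) : Prop :=
  ∀ i, ρ.ac i = σ d (hist ρ i) (ρ.st i) ∧ 0 < M.δ (ρ.st i) (ρ.ac i) (ρ.st (i+1))

/-- one step of the resource-level evolution; `none` is ⊥ (exhaustion) -/
def nextLevel (M : CMDP S A) (s : S) (a : A) : Option ℕ → Option ℕ
  | none => none
  | some l =>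
      if s ∈ M.R then (if M.γ s a ≤ M.cap then some (M.cap - M.γ s a) else none)
      else (if M.γ s a ≤ l then some (l - M.γ s a) else none)

/-- resource levels along a path, starting from initial load `d` -/
def levels (M : CMDP S A) (d : ℕ) (st : ℕ → S) (ac : ℕ → A) : ℕ → Option ℕ
  | 0 => some d
  | i+1 => M.nextLevel (st i) (ac i) (levels M d st ac i)

/-- a run loaded with `d` is safe: ⊥ never occurs among the resource levels -/
def SafeRun (M : CMDP S A) (d : ℕ) (ρ : Run S A) : Prop :=
  ∀ i, levels M d ρ.st ρ.ac i ≠ none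

/-- all `σ`-compatible runs from `s` loaded with `d` are safe -/
def AllSafe (M : CMDP S A) (σ : Strat S A) (s : S) (d : ℕ) : Prop :=
  ∀ ρ : Run S A, Compatible M σ d ρ → ρ.st 0 = s → SafeRun M d ρ

/-- the resource level after a finite history -/
def levelOfHist (M : CMDP S A) (d : ℕ) (h : List (S × A)) : Option ℕ :=
  h.foldl (fun r p => M.nextLevel p.1 p.2 r) (some d)

/-- action value of `a` in `s` based on vector `v` -/
noncomputable def AV (M : CMDP S A) (v : S → ℕ∞) (s : S) (a : A) : ℕ∞ :=
  (M.γ s a : ℕ∞) + (M.Succ s a).sup v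

/-- the Bellman-style functional 𝓕 -/
noncomputable def Ffun (M : CMDP S A) (T : Finset S) (v : S → ℕ∞) : S → ℕ∞ :=
  fun s => if s ∈ T then 0 else Finset.univ.inf (fun a => M.AV v s a)

/-- the initial vector `x_T`: 0 on `T` and ∞ elsewhere -/
noncomputable def xT (T : Finset S) : S → ℕ∞ := fun s => if s ∈ T then 0 else ⊤

/-- truncation to zero on `T` -/
noncomputable def trunc0 (T : Finset S) (v : S → ℕ∞) : S → ℕ∞ :=
  fun s => if s ∈ T then 0 else v s

/-- the functional 𝓖 (for reachability in at least one step) -/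
noncomputable def Gfun (M : CMDP S A) (T : Finset S) (v : S → ℕ∞) : S → ℕ∞ :=
  fun s => Finset.univ.inf (fun a => M.AV (trunc0 T v) s a)

/-- bounded non-reloading reachability objective `Reach_T^i` -/
def NRReachB (M : CMDP S A) (T : Finset S) (i : ℕ) (d : ℕ) (ρ : Run S A) : Prop :=
  ∃ f ≤ i, ρ.st f ∈ T ∧ (∑ j ∈ Finset.range f, M.γ (ρ.st j) (ρ.ac j)) ≤ d

/-- non-reloading reachability objective -/
def NRReach (M : CMDP S A) (T : Finset S) (d : ℕ) (ρ : Run S A) : Prop :=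
  ∃ i, NRReachB M T i d ρ

/-- non-reloading reachability in at least one step -/
def NRReachPlus (M : CMDP S A) (T : Finset S) (d : ℕ) (ρ : Run S A) : Prop :=
  ∃ f, 1 ≤ f ∧ ρ.st f ∈ T ∧ (∑ j ∈ Finset.range f, M.γ (ρ.st j) (ρ.ac j)) ≤ d

/-- sure satisfaction of an objective from `s` loaded with `d` -/
def SureSat (M : CMDP S A) (σ : Strat S A) (s : S) (d : ℕ)
    (O : ℕ → Run S A → Prop) : Prop :=
  ∀ ρ, Compatible M σ d ρ → ρ.st 0 = s → O d ρ

/-- a vector of loads is sufficient for surely satisfying an objective -/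
def SatVec (M : CMDP S A) (O : ℕ → Run S A → Prop) (x : S → ℕ∞) : Prop :=
  ∃ σ : Strat S A, ∀ s (d : ℕ), x s = (d : ℕ∞) → SureSat M σ s d O

/-- `x` is the componentwise-minimal vector satisfying `Sat` -/
def IsML {S : Type} (Sat : (S → ℕ∞) → Prop) (x : S → ℕ∞) : Prop :=
  Sat x ∧ ∀ y, Sat y → x ≤ y

/-- a vector of loads is sufficient for safety -/
def SafetySat (M : CMDP S A) (x : S → ℕ∞) : Prop :=
  ∃ σ : Strat S A, ∀ s (d : ℕ), x s = (d : ℕ∞) → AllSafe M σ s d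

/-- a decreasing CMDP: every cycle contains a positive-consumption transition -/
def Decreasing (M : CMDP S A) : Prop :=
  ∀ (n : ℕ) (st : ℕ → S) (ac : ℕ → A), 0 < n →
    (∀ i < n, 0 < M.δ (st i) (ac i) (st (i+1))) → st 0 = st n →
    ∃ i < n, 0 < M.γ (st i) (ac i)

/-- a valid finite path of length `n` -/
def ValidPath (M : CMDP S A) (n : ℕ) (st : ℕ → S) (ac : ℕ → A) : Prop :=
  ∀ i < n, 0 < M.δ (st i) (ac i) (st (i+1))

/-- a simple path: no proper infix forms a cycle -/
def SimplePath (M : CMDP S A) (n : ℕ) (st : ℕ → S) (ac : ℕ → A) : Prop :=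
  ValidPath M n st ac ∧ ∀ i j, i < j → j ≤ n → st i = st j → i = 0 ∧ j = n

/-- probability, under strategy `σ` with load `d` and past history `h`, that the
next `n` steps (states s₁ … s_{n+1}) avoid `T`. -/
noncomputable def probAvoid (M : CMDP S A) (T : Finset S) (σ : Strat S A) (d : ℕ) :
    ℕ → List (S × A) → S → NNReal
  | 0, _, s => if s ∈ T then 0 else 1
  | n+1, h, s =>
      if s ∈ T then 0 else
      ∑ t, M.δ s (σ d h s) t * probAvoid M T σ d n (h ++ [(s, σ d h s)]) t

/-- probability, under strategy `σ` with load `d` and past history `h`, that the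
next `n` steps contain fewer than `k` visits to `T`. -/
noncomputable def probFew (M : CMDP S A) (T : Finset S) (σ : Strat S A) (d : ℕ) :
    ℕ → ℕ → List (S × A) → S → NNReal
  | 0, k, _, s => if k ≤ (if s ∈ T then 1 else 0) then 0 else 1
  | n+1, k, h, s =>
      if k ≤ (if s ∈ T then 1 else 0) then 0 else
      ∑ t, M.δ s (σ d h s) t *
        probFew M T σ d n (k - (if s ∈ T then 1 else 0)) (h ++ [(s, σ d h s)]) t

/-- hope value of successor `s'` for `a` in `s`, based on `x` and safety vector `mlS` -/
noncomputable def HV (M : CMDP S A) (mlS : S → ℕ∞) (x : S → ℕ∞)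
    (s : S) (a : A) (s' : S) : ℕ∞ :=
  max (x s') (((M.Succ s a).erase s').sup mlS)

/-- safe value of `a` in `s` based on `x` and safety vector `mlS` -/
noncomputable def SV (M : CMDP S A) (mlS : S → ℕ∞) (x : S → ℕ∞) (s : S) (a : A) : ℕ∞ :=
  (M.γ s a : ℕ∞) + (M.Succ s a).inf (fun s' => HV M mlS x s a s')

/-- thresholded safe value: only successors with probability at least `θ` count -/
noncomputable def SVθ (M : CMDP S A) (mlS : S → ℕ∞) (θ : NNReal) (x : S → ℕ∞)
    (s : S) (a : A) : ℕ∞ :=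
  (M.γ s a : ℕ∞) +
    ((M.Succ s a).filter (fun s' => θ ≤ M.δ s a s')).inf (fun s' => HV M mlS x s a s')

/-- the truncation operator ⌈·⌉_{R'}^{cap} -/
noncomputable def truncRset (M : CMDP S A) (R' : Finset S) (x : S → ℕ∞) : S → ℕ∞ :=
  fun s => if (M.cap : ℕ∞) < x s then ⊤ else if s ∈ R' then 0 else x s

/-- the functional 𝓐 -/
noncomputable def Afun (M : CMDP S A) (T : Finset S) (mlS : S → ℕ∞)
    (x : S → ℕ∞) : S → ℕ∞ :=
  fun s => if s ∈ T then mlS s else Finset.univ.inf (fun a => SV M mlS x s a)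

/-- the operator 𝓑 = ⌈𝓐(·)⌉_R^cap -/
noncomputable def Bfun (M : CMDP S A) (T : Finset S) (mlS : S → ℕ∞)
    (x : S → ℕ∞) : S → ℕ∞ :=
  truncRset M M.R (Afun M T mlS x)

/-- the thresholded functional 𝓐_θ -/
noncomputable def Aθfun (M : CMDP S A) (T : Finset S) (mlS : S → ℕ∞) (θ : NNReal)
    (x : S → ℕ∞) : S → ℕ∞ :=
  fun s => if s ∈ T then mlS s else Finset.univ.inf (fun a => SVθ M mlS θ x s a)

/-- the thresholded operator 𝓑_θ -/
noncomputable def Bθfun (M : CMDP S A) (T : Finset S) (mlS : S → ℕ∞) (θ : NNReal)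
    (x : S → ℕ∞) : S → ℕ∞ :=
  truncRset M M.R (Aθfun M T mlS θ x)

/-- the initial vector `y_T`: `mlS` on `T` and ∞ elsewhere -/
noncomputable def yT (M : CMDP S A) (T : Finset S) (mlS : S → ℕ∞) : S → ℕ∞ :=
  fun s => if s ∈ T then mlS s else ⊤

/-- a vector of loads suffices for safely reaching `T` within `i` steps with
positive probability -/
def PosReachSatB (M : CMDP S A) (T : Finset S) (i : ℕ) (x : S → ℕ∞) : Prop :=
  ∃ σ : Strat S A, ∀ s (d : ℕ), x s = (d : ℕ∞) →
    AllSafe M σ s d ∧ probAvoid M T σ d i [] s < 1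

/-- a vector of loads suffices for safely reaching `T` with positive probability -/
def PosReachSat (M : CMDP S A) (T : Finset S) (x : S → ℕ∞) : Prop :=
  ∃ σ : Strat S A, ∀ s (d : ℕ), x s = (d : ℕ∞) →
    AllSafe M σ s d ∧ ∃ i, probAvoid M T σ d i [] s < 1

/-- a vector of loads suffices for safely reaching `T` almost surely -/
def ASReachSat (M : CMDP S A) (T : Finset S) (x : S → ℕ∞) : Prop :=
  ∃ σ : Strat S A, ∀ s (d : ℕ), x s = (d : ℕ∞) →
    d ≤ M.cap ∧ AllSafe M σ s d ∧ (⨅ n, probAvoid M T σ d n [] s) = 0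

/-- a vector of loads suffices for safely visiting `T` infinitely often a.s. -/
def ASBuchiSat (M : CMDP S A) (T : Finset S) (x : S → ℕ∞) : Prop :=
  ∃ σ : Strat S A, ∀ s (d : ℕ), x s = (d : ℕ∞) →
    d ≤ M.cap ∧ AllSafe M σ s d ∧ ∀ k : ℕ, (⨅ n, probFew M T σ d n k [] s) = 0

/-- a safe action in `s` with resource level `l` (w.r.t. the safety vector `mlS`) -/
def SafeAct (M : CMDP S A) (mlS : S → ℕ∞) (s : S) (l : ℕ) (a : A) : Prop :=
  AV M mlS s a ≤ (l : ℕ∞) ∨ (AV M mlS s a ≤ (M.cap : ℕ∞) ∧ s ∈ M.R) ∨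
    (M.cap : ℕ∞) < mlS s

/-- a safe strategy picks a safe action whenever one exists -/
def SafeStrat (M : CMDP S A) (mlS : S → ℕ∞) (σ : Strat S A) : Prop :=
  ∀ (d : ℕ) (h : List (S × A)) (s : S) (l : ℕ), levelOfHist M d h = some l →
    (∃ a, SafeAct M mlS s l a) → SafeAct M mlS s l (σ d h s)

/-- the CMDP `C(R')`: as `M`, but with reload set `R'` -/
def withReloads (M : CMDP S A) (R' : Finset S) : CMDP S A :=
  { M with R := R' }

/-- a finite-memory strategy -/
def FiniteMemory (σ : Strat S A) : Prop :=
  ∃ (Mem : Type) (_ : Finite Mem) (upd : Mem → S × A → Mem) (m0 : ℕ → Mem)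
    (out : Mem → S → A), ∀ d h s, σ d h s = out (h.foldl upd (m0 d)) s

/-- the modified CMDP C→T with a fresh absorbing reload state `sink = none` -/
noncomputable def toSink (M : CMDP S A) (T : Finset S) (mlS : S → ℕ∞) :
    CMDP (Option S) A where
  δ := fun s a t =>
    match s with
    | none => if t = none then 1 else 0
    | some s' =>
        if s' ∈ T then (if t = none then 1 else 0)
        else (match t with
              | none => 0
              | some t' => M.δ s' a t')
  δ_sum := by
    intro s a
    cases s with
    | none => simp [Fintype.sum_option]
    | some s' =>
        by_cases hs : s' ∈ T
        · simp [hs, Fintype.sum_option]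
        · simp [hs, Fintype.sum_option, M.δ_sum]
  γ := fun s a =>
    match s with
    | none => 1
    | some s' =>
        if s' ∈ T then (if mlS s' = ⊤ then M.cap + 1 else (mlS s').toNat)
        else M.γ s' a
  R := insert none (M.R.image some)
  cap := M.cap

end CMDP

/-!
Starting from a load `d ≥ ml_S(s)`, a safe strategy keeps the invariant `ml_S(s) ≤ level ≤ cap`
along every compatible run. The invariant guarantees that a safe action exists: a strategy
witnessing `ml_S` takes, from `s` loaded with `ml_S(s)`, an action whose residual level `l'`
dominates `ml_S` of every successor `t` (otherwise prefixing that step to runs from `t` would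
make `ml_S` with `t ↦ l'` a smaller safe vector), so its action value is at most the level
available at `s`, which is `cap` at a reload state. Conversely, a safe action keeps the level defined and restores the invariant
at every successor.
-/

theorem ENat.natCast_add_le_natCast_iff {g b : ℕ} {x : ℕ∞} :
    (g : ℕ∞) + x ≤ b ↔ g ≤ b ∧ x ≤ ((b - g : ℕ) : ℕ∞) := by
  induction x using ENat.recTopCoe with
  | top => simp
  | coe x => norm_cast; omega

namespace CMDP

variable {S A : Type}

theorem hist_succ (ρ : Run S A) (n : ℕ) :
    hist ρ (n + 1) = hist ρ n ++ [(ρ.st n, ρ.ac n)] := by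
  simp [hist, List.range_succ]

def Run.cons (s : S) (a : A) (ρ : Run S A) : Run S A where
  st n := Nat.casesOn n s ρ.st
  ac n := Nat.casesOn n a ρ.ac

theorem hist_cons_succ (s : S) (a : A) (ρ : Run S A) (n : ℕ) :
    hist (ρ.cons s a) (n + 1) = (s, a) :: hist ρ n := by
  simp [hist, List.range_succ_eq_map, Run.cons]

def startState (h : List (S × A)) (u : S) : S :=
  match h with
  | [] => u
  | p :: _ => p.1

theorem startState_hist (ρ : Run S A) (n : ℕ) : startState (hist ρ n) (ρ.st n) = ρ.st 0 := by
  cases n <;> simp [startState, hist, List.range_succ_eq_map]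

noncomputable def Strat.ite (P : ℕ → S → Prop) (σ₁ σ₂ : Strat S A) : Strat S A :=
  fun e h u => if P e (startState h u) then σ₁ e h u else σ₂ e h u

variable [Fintype S] [Fintype A]

@[simp]
theorem mem_Succ {M : CMDP S A} {s t : S} {a : A} : t ∈ M.Succ s a ↔ 0 < M.δ s a t := by
  simp [Succ]

theorem exists_pos_δ (M : CMDP S A) (s : S) (a : A) : ∃ t, 0 < M.δ s a t := by
  by_contra! h
  simpa [nonpos_iff_eq_zero.mp (h _)] using M.δ_sum s a

theorem compatible_ite_of_pos {M : CMDP S A} {P : ℕ → S → Prop} {σ₁ σ₂ : Strat S A} {e : ℕ}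
    {ρ : Run S A} (hρ : Compatible M (Strat.ite P σ₁ σ₂) e ρ) (hP : P e (ρ.st 0)) :
    Compatible M σ₁ e ρ := fun n => by
  simpa [Strat.ite, startState_hist, hP] using hρ n

theorem compatible_ite_of_neg {M : CMDP S A} {P : ℕ → S → Prop} {σ₁ σ₂ : Strat S A} {e : ℕ}
    {ρ : Run S A} (hρ : Compatible M (Strat.ite P σ₁ σ₂) e ρ) (hP : ¬P e (ρ.st 0)) :
    Compatible M σ₂ e ρ := fun n => by
  simpa [Strat.ite, startState_hist, hP] using hρ n

def Strat.after (σ : Strat S A) (d : ℕ) (s : S) (a : A) : Strat S A :=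
  fun _ h u => σ d ((s, a) :: h) u

theorem compatible_cons {M : CMDP S A} {σ : Strat S A} {d e : ℕ} {s : S} {ρ : Run S A}
    (hρ : Compatible M (σ.after d s (σ d [] s)) e ρ) (hs : 0 < M.δ s (σ d [] s) (ρ.st 0)) :
    Compatible M σ d (ρ.cons s (σ d [] s)) := by
  rintro (_ | n)
  · exact ⟨rfl, hs⟩
  · rw [hist_cons_succ]
    exact hρ n

theorem exists_compatible (M : CMDP S A) (σ : Strat S A) (d : ℕ) (s : S) :
    ∃ ρ : Run S A, Compatible M σ d ρ ∧ ρ.st 0 = s := by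
  choose next hnext using exists_pos_δ M
  let step : S × List (S × A) → S × List (S × A) :=
    fun p => (next p.1 (σ d p.2 p.1), p.2 ++ [(p.1, σ d p.2 p.1)])
  let ρ : Run S A :=
    ⟨fun n => (step^[n] (s, [])).1, fun n => σ d (step^[n] (s, [])).2 (step^[n] (s, [])).1⟩
  have hhist : ∀ n, (step^[n] (s, [])).2 = hist ρ n := by
    intro n
    induction n with
    | zero => rfl
    | succ n ih => rw [Function.iterate_succ_apply', hist_succ, ← ih]
  refine ⟨ρ, fun n => ⟨?_, ?_⟩, rfl⟩
  · change σ d (step^[n] (s, [])).2 _ = _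
    rw [hhist]
  · simp only [ρ, Function.iterate_succ_apply']
    exact hnext _ _

variable [DecidableEq S]

def rechargedLevel (M : CMDP S A) (s : S) (l : ℕ) : ℕ :=
  if s ∈ M.R then M.cap else l

theorem nextLevel_some (M : CMDP S A) (s : S) (a : A) (l : ℕ) :
    M.nextLevel s a (some l) =
      if M.γ s a ≤ M.rechargedLevel s l then some (M.rechargedLevel s l - M.γ s a) else none := by
  by_cases hs : s ∈ M.R <;> simp [nextLevel, rechargedLevel, hs]

theorem levels_cons_succ (M : CMDP S A) {d l : ℕ} {s : S} {a : A} (ρ : Run S A)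
    (h : M.nextLevel s a (some d) = some l) (n : ℕ) :
    levels M d (ρ.cons s a).st (ρ.cons s a).ac (n + 1) = levels M l ρ.st ρ.ac n := by
  induction n with
  | zero => exact h
  | succ n ih => exact congrArg (M.nextLevel (ρ.st n) (ρ.ac n)) ih

theorem levelOfHist_hist (M : CMDP S A) (d : ℕ) (ρ : Run S A) (n : ℕ) :
    levelOfHist M d (hist ρ n) = levels M d ρ.st ρ.ac n := by
  induction n with
  | zero => rfl
  | succ n ih => rw [levelOfHist, hist_succ, List.foldl_append, ← levelOfHist, ih]; rfl

theorem safetySat_update {M : CMDP S A} {x : S → ℕ∞} {σ : Strat S A}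
    (hσ : ∀ u (e : ℕ), x u = e → AllSafe M σ u e) {s t : S} {d l : ℕ} (hd : x s = d)
    (hl : M.nextLevel s (σ d [] s) (some d) = some l) (ht : 0 < M.δ s (σ d [] s) t) :
    SafetySat M (Function.update x t l) := by
  refine ⟨Strat.ite (fun e u => e = l ∧ u = t) (σ.after d s (σ d [] s)) σ, ?_⟩
  intro u e hu ρ hρ h0
  by_cases hP : e = l ∧ u = t
  · obtain ⟨rfl, rfl⟩ := hP
    have hcons := compatible_cons (compatible_ite_of_pos hρ ⟨rfl, h0⟩) (h0 ▸ ht)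
    intro n
    rw [← levels_cons_succ M ρ hl]
    exact hσ s d hd _ hcons rfl (n + 1)
  · have hxu : x u = e := by
      by_cases hut : u = t
      · subst hut
        simp only [Function.update_self, Nat.cast_inj] at hu
        exact absurd ⟨hu.symm, rfl⟩ hP
      · rwa [Function.update_of_ne hut] at hu
    exact hσ u e hxu ρ (compatible_ite_of_neg hρ (h0 ▸ hP)) h0

theorem exists_AV_le_rechargedLevel {M : CMDP S A} {mlS : S → ℕ∞}
    (hml : IsML (SafetySat M) mlS) {s : S} {d : ℕ} (hd : mlS s = d) :
    ∃ a, AV M mlS s a ≤ M.rechargedLevel s d := by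
  obtain ⟨σ, hσ⟩ := hml.1
  refine ⟨σ d [] s, ?_⟩
  obtain ⟨ρ, hρ, h0⟩ := exists_compatible M σ d s
  have hsafe := hσ s d hd ρ hρ h0 1
  have hstep : levels M d ρ.st ρ.ac 1 = M.nextLevel s (σ d [] s) (some d) := by
    change M.nextLevel (ρ.st 0) (ρ.ac 0) (some d) = _
    rw [(hρ 0).1, h0]
    rfl
  rw [hstep, nextLevel_some] at hsafe
  split_ifs at hsafe with hγ
  · set l := M.rechargedLevel s d - M.γ s (σ d [] s)
    have hl : M.nextLevel s (σ d [] s) (some d) = some l := by rw [nextLevel_some, if_pos hγ]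
    have hsucc : (M.Succ s (σ d [] s)).sup mlS ≤ l := Finset.sup_le fun t ht => by
      simpa using hml.2 _ (safetySat_update hσ hd hl (mem_Succ.mp ht)) t
    exact ENat.natCast_add_le_natCast_iff.mpr ⟨hγ, hsucc⟩
  · exact absurd rfl hsafe

theorem exists_safeAct {M : CMDP S A} {mlS : S → ℕ∞} (hml : IsML (SafetySat M) mlS)
    {s : S} {l : ℕ} (hl : mlS s ≤ l) : ∃ a, SafeAct M mlS s l a := by
  lift mlS s to ℕ using ne_top_of_le_ne_top (ENat.natCast_ne_top l) hl with e he
  obtain ⟨a, ha⟩ := exists_AV_le_rechargedLevel hml he.symm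
  refine ⟨a, ?_⟩
  by_cases hs : s ∈ M.R
  · exact Or.inr (Or.inl ⟨by simpa [rechargedLevel, hs] using ha, hs⟩)
  · exact Or.inl (ha.trans (by simpa [rechargedLevel, hs] using hl))

theorem AV_le_rechargedLevel_of_safeAct {M : CMDP S A} {mlS : S → ℕ∞} {s : S} {l : ℕ} {a : A}
    (hl : mlS s ≤ l) (hcap : l ≤ M.cap) (ha : SafeAct M mlS s l a) :
    AV M mlS s a ≤ M.rechargedLevel s l := by
  rcases ha with ha | ⟨ha, hs⟩ | hbig
  · refine ha.trans ?_
    unfold rechargedLevel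
    split_ifs <;> exact_mod_cast (by omega)
  · simpa [rechargedLevel, hs] using ha
  · exact absurd (hl.trans (by exact_mod_cast hcap)) (not_le.mpr hbig)

theorem nextLevel_of_AV_le {M : CMDP S A} {mlS : S → ℕ∞} {s : S} {a : A} {l : ℕ}
    (ha : AV M mlS s a ≤ M.rechargedLevel s l) :
    ∃ l', M.nextLevel s a (some l) = some l' ∧ l' ≤ M.rechargedLevel s l ∧
      ∀ t ∈ M.Succ s a, mlS t ≤ l' := by
  obtain ⟨hγ, hsucc⟩ := ENat.natCast_add_le_natCast_iff.mp ha
  exact ⟨_, by rw [nextLevel_some, if_pos hγ], Nat.sub_le _ _, Finset.sup_le_iff.mp hsucc⟩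

theorem rechargedLevel_le_cap {M : CMDP S A} {s : S} {l : ℕ} (hl : l ≤ M.cap) :
    M.rechargedLevel s l ≤ M.cap := by
  unfold rechargedLevel
  split_ifs <;> omega

theorem levels_invariant_of_safeStrat {M : CMDP S A} {mlS : S → ℕ∞}
    (hml : IsML (SafetySat M) mlS) {σ : Strat S A} (hσ : SafeStrat M mlS σ) {d : ℕ}
    {ρ : Run S A} (hρ : Compatible M σ d ρ) (hd : mlS (ρ.st 0) ≤ d) (hcap : d ≤ M.cap) (i : ℕ) :
    ∃ l : ℕ, levels M d ρ.st ρ.ac i = some l ∧ mlS (ρ.st i) ≤ l ∧ l ≤ M.cap := by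
  induction i with
  | zero => exact ⟨d, rfl, hd, hcap⟩
  | succ i ih =>
    obtain ⟨l, hl, hml_l, hl_cap⟩ := ih
    have hsafe : SafeAct M mlS (ρ.st i) l (ρ.ac i) := by
      rw [(hρ i).1]
      exact hσ d _ _ l (by rw [levelOfHist_hist, hl]) (exists_safeAct hml hml_l)
    obtain ⟨l', hnext, hl'_le, hsucc⟩ :=
      nextLevel_of_AV_le (AV_le_rechargedLevel_of_safeAct hml_l hl_cap hsafe)
    refine ⟨l', ?_, hsucc _ (mem_Succ.mpr (hρ i).2), hl'_le.trans (rechargedLevel_le_cap hl_cap)⟩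
    change M.nextLevel (ρ.st i) (ρ.ac i) (levels M d ρ.st ρ.ac i) = some l'
    rw [hl, hnext]

end CMDP

open CMDP in
theorem stmt6_general {S A : Type} [Fintype S] [Fintype A] [DecidableEq S]
    (M : CMDP S A) (mlS : S → ℕ∞)
    (hml : IsML (SafetySat M) mlS)
    (σ : Strat S A) (hσ : SafeStrat M mlS σ) :
    ∀ (s : S) (d : ℕ), mlS s ≤ (d : ℕ∞) → d ≤ M.cap →
      ∀ ρ : Run S A, Compatible M σ d ρ → ρ.st 0 = s →
        SafeRun M d ρ ∧
        ∀ i : ℕ, ∃ l : ℕ, levels M d ρ.st ρ.ac i = some l ∧ mlS (ρ.st i) ≤ (l : ℕ∞) := by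
  rintro s d hd hcap ρ hρ rfl
  have hinv := levels_invariant_of_safeStrat hml hσ hρ hd hcap
  refine ⟨fun i => ?_, fun i => ?_⟩
  · obtain ⟨l, hl, -⟩ := hinv i
    simp [hl]
  · obtain ⟨l, hl, hle, -⟩ := hinv i
    exact ⟨l, hl, hle⟩

open CMDP in
/-- every safe strategy satisfies the safety objective when loaded
with the minimal safety vector; in particular along every compatible path the
resource level stays at least `ml_S` of the current state (and is never ⊥). -/
theorem stmt6 {S A : Type} [Fintype S] [Fintype A] [DecidableEq S] [DecidableEq A]
    (M : CMDP S A) (mlS : S → ℕ∞)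
    (hml : IsML (SafetySat M) mlS)
    (σ : Strat S A) (hσ : SafeStrat M mlS σ) :
    ∀ (s : S) (d : ℕ), mlS s ≤ (d : ℕ∞) → d ≤ M.cap →
      ∀ ρ : Run S A, Compatible M σ d ρ → ρ.st 0 = s →
        SafeRun M d ρ ∧
        ∀ i : ℕ, ∃ l : ℕ, levels M d ρ.st ρ.ac i = some l ∧ mlS (ρ.st i) ≤ (l : ℕ∞) :=
  stmt6_general M mlS hml σ hσ
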